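/- Let M⁻¹ = Σ_{i=0}^N R_i^T K_i⁻¹ R_i with K_i = R_i K R_i^T SPD, and suppose there exists C₀ > 0 such that every u ∈ ℝ^n admits a decomposition u = Σ_i R_i^T u_i with Σ_i u_i^T K_i u_i ≤ C₀ u^T K u (stable decomposition). Then the smallest eigenvalue of M⁻¹K is at least 1/C₀. -/

import Mathlib

/-!
Let `B = Σ Rᵢᵀ Kᵢ⁻¹ Rᵢ`, take an eigenvector `B K v = μ v` and a stable decomposition
`v = Σ Rᵢᵀ uᵢ`. With `g = K v` and the local solutions `wᵢ = Kᵢ⁻¹ Rᵢ g`, the energy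
`vᵀ K v` is the cross term `Σ uᵢᵀ Kᵢ wᵢ`, while `Σ wᵢᵀ Kᵢ wᵢ = gᵀ B g = μ vᵀ K v`.
Cauchy–Schwarz in the `Kᵢ`-inner products then gives
`(vᵀ K v)² ≤ (Σ uᵢᵀ Kᵢ uᵢ) · μ vᵀ K v ≤ C₀ μ (vᵀ K v)²`, i.e. `1 ≤ C₀ μ`.
-/

open Matrix

theorem Matrix.exists_mulVec_eq_smul_of_mem_spectrum {𝕜 n : Type*} [Field 𝕜] [Fintype n]
    [DecidableEq n] {A : Matrix n n 𝕜} {μ : 𝕜} (hμ : μ ∈ spectrum 𝕜 A) :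
    ∃ v ≠ 0, A *ᵥ v = μ • v := by
  rw [← spectrum_toLin'] at hμ
  obtain ⟨v, hv⟩ := (Module.End.HasEigenvalue.of_mem_spectrum hμ).exists_hasEigenvector
  exact ⟨v, hv.2, hv.apply_eq_smul⟩

section SchwarzInequality

variable {ι n : Type*} [Fintype ι] [Fintype n] {m : ι → Type*} [∀ i, Fintype (m i)]

theorem sq_sum_dotProduct_mulVec_le (A : ∀ i, Matrix (m i) (m i) ℝ)
    (hA : ∀ i, (A i).PosSemidef) (u w : ∀ i, m i → ℝ) :
    (∑ i, u i ⬝ᵥ (A i *ᵥ w i)) ^ 2 ≤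
      (∑ i, u i ⬝ᵥ (A i *ᵥ u i)) * ∑ i, w i ⬝ᵥ (A i *ᵥ w i) := by
  have hsymm : ∀ i, w i ⬝ᵥ (A i *ᵥ u i) = u i ⬝ᵥ (A i *ᵥ w i) := fun i => by
    rw [dotProduct_comm, dotProduct_mulVec, ← mulVec_transpose,
      ← conjTranspose_eq_transpose_of_trivial, (hA i).1]
  have hquad : ∀ t : ℝ, 0 ≤ (∑ i, w i ⬝ᵥ (A i *ᵥ w i)) * (t * t) +
      (-2 * ∑ i, u i ⬝ᵥ (A i *ᵥ w i)) * t + ∑ i, u i ⬝ᵥ (A i *ᵥ u i) := fun t => by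
    have hexp : ∀ i, (u i - t • w i) ⬝ᵥ (A i *ᵥ (u i - t • w i)) =
        w i ⬝ᵥ (A i *ᵥ w i) * (t * t) - 2 * (u i ⬝ᵥ (A i *ᵥ w i)) * t +
          u i ⬝ᵥ (A i *ᵥ u i) := fun i => by
      simp only [mulVec_sub, mulVec_smul, dotProduct_sub, sub_dotProduct, smul_dotProduct,
        dotProduct_smul, smul_eq_mul, hsymm]
      ring
    calc 0 ≤ ∑ i, (u i - t • w i) ⬝ᵥ (A i *ᵥ (u i - t • w i)) :=
          Finset.sum_nonneg fun i _ => by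
            simpa using (hA i).dotProduct_mulVec_nonneg (u i - t • w i)
      _ = _ := by
          simp only [hexp, Finset.sum_add_distrib, Finset.sum_sub_distrib, ← Finset.sum_mul,
            ← Finset.mul_sum]
          ring
  have hdiscrim := discrim_le_zero hquad
  rw [discrim] at hdiscrim
  linarith

variable [∀ i, DecidableEq (m i)]

theorem sq_sum_transpose_mulVec_dotProduct_le (A : ∀ i, Matrix (m i) (m i) ℝ)
    (hA : ∀ i, (A i).PosDef) (R : ∀ i, Matrix (m i) n ℝ) (u : ∀ i, m i → ℝ) (g : n → ℝ) :
    ((∑ i, (R i)ᵀ *ᵥ u i) ⬝ᵥ g) ^ 2 ≤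
      (∑ i, u i ⬝ᵥ (A i *ᵥ u i)) * (((∑ i, (R i)ᵀ * (A i)⁻¹ * R i) *ᵥ g) ⬝ᵥ g) := by
  set w : ∀ i, m i → ℝ := fun i => (A i)⁻¹ *ᵥ (R i *ᵥ g)
  have hAw : ∀ i, A i *ᵥ w i = R i *ᵥ g := fun i => by
    rw [mulVec_mulVec, mul_nonsing_inv _ ((hA i).isUnit.map detMonoidHom), one_mulVec]
  have hcross : (∑ i, (R i)ᵀ *ᵥ u i) ⬝ᵥ g = ∑ i, u i ⬝ᵥ (A i *ᵥ w i) := by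
    simp only [hAw, sum_dotProduct, mulVec_transpose, dotProduct_mulVec]
  have henergy : ((∑ i, (R i)ᵀ * (A i)⁻¹ * R i) *ᵥ g) ⬝ᵥ g = ∑ i, w i ⬝ᵥ (A i *ᵥ w i) := by
    rw [sum_mulVec, sum_dotProduct]
    refine Finset.sum_congr rfl fun i _ => ?_
    rw [hAw, dotProduct_mulVec, ← mulVec_transpose, mulVec_mulVec, mulVec_mulVec, Matrix.mul_assoc]
  rw [hcross, henergy]
  exact sq_sum_dotProduct_mulVec_le A (fun i => (hA i).posSemidef) u w

end SchwarzInequality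

/-- Lions' lemma (stable decomposition lower bound): if every `u` admits a
decomposition `u = Σ_i R_iᵀ u_i` with `Σ_i u_iᵀ K_i u_i ≤ C₀ uᵀ K u`, then
every eigenvalue of `M⁻¹K` is at least `1/C₀`. -/
theorem additive_schwarz_lower_bound {n N : ℕ}
    (K : Matrix (Fin n) (Fin n) ℝ) (hK : K.PosDef)
    (nloc : Fin (N + 1) → ℕ)
    (R : ∀ i : Fin (N + 1), Matrix (Fin (nloc i)) (Fin n) ℝ)
    (hR : ∀ i, LinearIndependent ℝ (R i))
    (C₀ : ℝ) (hC₀ : 0 < C₀)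
    (hstable : ∀ u : Fin n → ℝ, ∃ uloc : ∀ i, Fin (nloc i) → ℝ,
      u = ∑ i, (R i).transpose *ᵥ uloc i ∧
      ∑ i, uloc i ⬝ᵥ ((R i * K * (R i).transpose) *ᵥ uloc i) ≤
        C₀ * (u ⬝ᵥ (K *ᵥ u))) :
    ∀ μ ∈ spectrum ℝ
      ((∑ i, (R i).transpose * (R i * K * (R i).transpose)⁻¹ * R i) * K),
      1 / C₀ ≤ μ := by
  intro μ hμ
  obtain ⟨v, hv0, hv⟩ := exists_mulVec_eq_smul_of_mem_spectrum hμ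
  have hKloc : ∀ i, (R i * K * (R i)ᵀ).PosDef := fun i => by
    simpa using hK.mul_mul_conjTranspose_same (vecMul_injective_iff.mpr (hR i))
  have hs : 0 < v ⬝ᵥ (K *ᵥ v) := by simpa using hK.dotProduct_mulVec_pos hv0
  obtain ⟨uloc, hdec, hbound⟩ := hstable v
  have hlions := sq_sum_transpose_mulVec_dotProduct_le _ hKloc R uloc (K *ᵥ v)
  rw [← hdec, mulVec_mulVec, hv, smul_dotProduct, smul_eq_mul] at hlions
  set s := v ⬝ᵥ (K *ᵥ v)
  have henergy_nonneg : 0 ≤ ∑ i, uloc i ⬝ᵥ ((R i * K * (R i)ᵀ) *ᵥ uloc i) :=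
    Finset.sum_nonneg fun i _ => by
      simpa using (hKloc i).posSemidef.dotProduct_mulVec_nonneg (uloc i)
  have hμs : 0 < μ * s := pos_of_mul_pos_right ((pow_pos hs 2).trans_le hlions) henergy_nonneg
  have hsq : s ^ 2 ≤ μ * C₀ * s ^ 2 :=
    calc s ^ 2 ≤ (∑ i, uloc i ⬝ᵥ ((R i * K * (R i)ᵀ) *ᵥ uloc i)) * (μ * s) := hlions
      _ ≤ C₀ * s * (μ * s) := mul_le_mul_of_nonneg_right hbound hμs.le
      _ = μ * C₀ * s ^ 2 := by ring
  rw [div_le_iff₀ hC₀]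
  exact (le_mul_iff_one_le_left (pow_pos hs 2)).mp hsq
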